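/- arXiv:1806.02595 — 12 statements merged into one kernel-verified Lean document; each statement's English description precedes it below -/
import Mathlib

section
/- Let (X, ≤₁, ≤₂) be a doubly ordered frame. If Y ⊆ X is ≤₂-increasing, then l(Y) is a stable set, i.e., l(r(l(Y))) = l(Y). -/
/-- `lset le1 Y = l(Y) = {x : ∀ z, x ≤₁ z → z ∉ Y}`. -/
def lset {X : Type*} (le1 : X → X → Prop) (Y : Set X) : Set X :=
  {x | ∀ z, le1 x z → z ∉ Y}

/-- `rset le2 Y = r(Y) = {x : ∀ z, x ≤₂ z → z ∉ Y}`. -/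
def rset {X : Type*} (le2 : X → X → Prop) (Y : Set X) : Set X :=
  {x | ∀ z, le2 x z → z ∉ Y}

/-- A set is stable if `Y = l(r(Y))`. -/
def UrqStable {X : Type*} (le1 le2 : X → X → Prop) (Y : Set X) : Prop :=
  Y = lset le1 (rset le2 Y)

/-- `Y` is increasing with respect to a relation `le`. -/
def UrqIncr {X : Type*} (le : X → X → Prop) (Y : Set X) : Prop :=
  ∀ x y, x ∈ Y → le x y → y ∈ Y

/-- A doubly ordered frame: `le1`, `le2` are quasiorders (preorders) and
`x ≤₁ y` together with `x ≤₂ y` implies `x = y`. -/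
def DoublyOrdered {X : Type*} (le1 le2 : X → X → Prop) : Prop :=
  (∀ x, le1 x x) ∧ (∀ x y z, le1 x y → le1 y z → le1 x z) ∧
  (∀ x, le2 x x) ∧ (∀ x y z, le2 x y → le2 y z → le2 x z) ∧
  (∀ x y, le1 x y → le2 x y → x = y)

theorem stmt2 {X : Type*} (le1 le2 : X → X → Prop) (h : DoublyOrdered le1 le2)
    (Y : Set X) (hY : UrqIncr le2 Y) :
    UrqStable le1 le2 (lset le1 Y) := by
  obtain ⟨r1, t1, r2, t2, _⟩ := h
  apply Set.eq_of_subset_of_subset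
  · intro x hx z hxz hz
    exact hz z (r2 z) (fun u hzu hu => hx u (t1 x z u hxz hzu) hu)
  · intro x hx z hxz hz
    exact hx z hxz (fun w hzw hw => hw w (r1 w) (hY z w hz hzw))
end

section
/- Let L be a bounded lattice, X_L its set of maximal filter–ideal pairs with the quasiorders x ≤ᵢ y iff xᵢ ⊆ yᵢ, and define h(a) = {x ∈ X_L : a ∈ x₁} for a ∈ L. Then for every a ∈ L, the set h(a) is a stable subset of the doubly ordered frame (X_L, ≤₁, ≤₂). -/
/-- A filter of a lattice: nonempty, upward closed, closed under binary meets. -/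
def UrqFilter {L : Type*} [Lattice L] (F : Set L) : Prop :=
  F.Nonempty ∧ (∀ a b, a ∈ F → a ≤ b → b ∈ F) ∧ (∀ a b, a ∈ F → b ∈ F → a ⊓ b ∈ F)

/-- A proper filter. -/
def UrqProperFilter {L : Type*} [Lattice L] (F : Set L) : Prop :=
  UrqFilter F ∧ F ≠ Set.univ

/-- An ideal of a lattice: nonempty, downward closed, closed under binary joins. -/
def UrqIdeal {L : Type*} [Lattice L] (I : Set L) : Prop :=
  I.Nonempty ∧ (∀ a b, a ∈ I → b ≤ a → b ∈ I) ∧ (∀ a b, a ∈ I → b ∈ I → a ⊔ b ∈ I)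

/-- A proper ideal. -/
def UrqProperIdeal {L : Type*} [Lattice L] (I : Set L) : Prop :=
  UrqIdeal I ∧ I ≠ Set.univ

/-- A filter–ideal pair: a proper filter and a proper ideal which are disjoint. -/
def UrqFIPair {L : Type*} [Lattice L] (p : Set L × Set L) : Prop :=
  UrqProperFilter p.1 ∧ UrqProperIdeal p.2 ∧ p.1 ∩ p.2 = ∅

/-- A maximal filter–ideal pair. -/
def UrqMaxFIPair {L : Type*} [Lattice L] (p : Set L × Set L) : Prop :=
  UrqFIPair p ∧
  (∀ F', UrqProperFilter F' → p.1 ⊂ F' → (F' ∩ p.2).Nonempty) ∧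
  (∀ I', UrqProperIdeal I' → p.2 ⊂ I' → (p.1 ∩ I').Nonempty)

/-- The set `X_L` of maximal filter–ideal pairs of `L`. -/
def UrqXL (L : Type*) [Lattice L] : Type _ := {p : Set L × Set L // UrqMaxFIPair p}

/-- `x ≤₁ y` iff `x₁ ⊆ y₁` on `X_L`. -/
def UrqLe1 {L : Type*} [Lattice L] (x y : UrqXL L) : Prop := x.1.1 ⊆ y.1.1

/-- `x ≤₂ y` iff `x₂ ⊆ y₂` on `X_L`. -/
def UrqLe2 {L : Type*} [Lattice L] (x y : UrqXL L) : Prop := x.1.2 ⊆ y.1.2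

/-- The Urquhart representation map `h(a) = {x ∈ X_L : a ∈ x₁}`. -/
def UrqH {L : Type*} [Lattice L] (a : L) : Set (UrqXL L) := {x | a ∈ x.1.1}

/-!
`h(a)` is `≤₁`-increasing, which gives `h(a) ⊆ l(r(h(a)))` by reflexivity of `≤₂`. Conversely, if
`a ∉ x₁` then `(x₁, ↓a)` is a filter–ideal pair, and Zorn's lemma extends it to a maximal pair `q`
with `x ≤₁ q`. Every `w` with `q ≤₂ w` has `a ∈ w₂`, hence `a ∉ w₁`; so `q ∈ r(h(a))`, and `x` is
not in `l(r(h(a)))`.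
-/

theorem subset_lset_rset {X : Type*} {le1 le2 : X → X → Prop} {Y : Set X}
    (hrefl : ∀ x, le2 x x) (hY : UrqIncr le1 Y) : Y ⊆ lset le1 (rset le2 Y) :=
  fun _ hx z hxz hz => hz z (hrefl z) (hY _ z hx hxz)

section Lattice

variable {L : Type*} [Lattice L]

theorem UrqFilter.sUnion_of_isChain {c : Set (Set L)} (hc : IsChain (· ⊆ ·) c)
    (hne : c.Nonempty) (hF : ∀ F ∈ c, UrqFilter F) : UrqFilter (⋃₀ c) := by
  obtain ⟨F₀, hF₀⟩ := hne
  obtain ⟨s₀, hs₀⟩ := (hF F₀ hF₀).1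
  refine ⟨⟨s₀, F₀, hF₀, hs₀⟩, ?_, ?_⟩
  · rintro s t ⟨F, hFc, hs⟩ hst
    exact ⟨F, hFc, (hF F hFc).2.1 s t hs hst⟩
  · rintro s t ⟨F, hFc, hs⟩ ⟨G, hGc, ht⟩
    rcases hc.total hFc hGc with hFG | hGF
    · exact ⟨G, hGc, (hF G hGc).2.2 s t (hFG hs) ht⟩
    · exact ⟨F, hFc, (hF F hFc).2.2 s t hs (hGF ht)⟩

theorem UrqIdeal.sUnion_of_isChain {c : Set (Set L)} (hc : IsChain (· ⊆ ·) c)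
    (hne : c.Nonempty) (hI : ∀ I ∈ c, UrqIdeal I) : UrqIdeal (⋃₀ c) := by
  obtain ⟨I₀, hI₀⟩ := hne
  obtain ⟨s₀, hs₀⟩ := (hI I₀ hI₀).1
  refine ⟨⟨s₀, I₀, hI₀, hs₀⟩, ?_, ?_⟩
  · rintro s t ⟨I, hIc, hs⟩ hts
    exact ⟨I, hIc, (hI I hIc).2.1 s t hs hts⟩
  · rintro s t ⟨I, hIc, hs⟩ ⟨J, hJc, ht⟩
    rcases hc.total hIc hJc with hIJ | hJI
    · exact ⟨J, hJc, (hI J hJc).2.2 s t (hIJ hs) ht⟩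
    · exact ⟨I, hIc, (hI I hIc).2.2 s t hs (hJI ht)⟩

theorem urqIdeal_Iic (a : L) : UrqIdeal (Set.Iic a) :=
  ⟨⟨a, le_rfl⟩, fun _ _ hs hts => hts.trans hs, fun _ _ hs ht => sup_le hs ht⟩

theorem UrqFIPair.of_disjoint {F I : Set L} (hF : UrqFilter F) (hI : UrqIdeal I)
    (hFI : F ∩ I = ∅) : UrqFIPair (F, I) := by
  obtain ⟨s, hs⟩ := hF.1
  obtain ⟨t, ht⟩ := hI.1
  refine ⟨⟨hF, fun hF_univ => ?_⟩, ⟨hI, fun hI_univ => ?_⟩, hFI⟩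
  · exact (Set.eq_empty_iff_forall_notMem.1 hFI) t ⟨Set.eq_univ_iff_forall.1 hF_univ t, ht⟩
  · exact (Set.eq_empty_iff_forall_notMem.1 hFI) s ⟨hs, Set.eq_univ_iff_forall.1 hI_univ s⟩

theorem UrqFIPair.sUnion_of_isChain {c : Set (Set L × Set L)} (hc : IsChain (· ≤ ·) c)
    (hne : c.Nonempty) (hp : ∀ p ∈ c, UrqFIPair p) :
    UrqFIPair (⋃₀ (Prod.fst '' c), ⋃₀ (Prod.snd '' c)) := by
  refine .of_disjoint
    (.sUnion_of_isChain (hc.image_of_map_rel _ _ _ fun _ _ h => h.1) (hne.image _) ?_)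
    (.sUnion_of_isChain (hc.image_of_map_rel _ _ _ fun _ _ h => h.2) (hne.image _) ?_) ?_
  · rintro _ ⟨p, hpc, rfl⟩
    exact (hp p hpc).1.1
  · rintro _ ⟨p, hpc, rfl⟩
    exact (hp p hpc).2.1.1
  · refine Set.eq_empty_iff_forall_notMem.2 ?_
    rintro t ⟨⟨_, ⟨p, hpc, rfl⟩, htp⟩, ⟨_, ⟨q, hqc, rfl⟩, htq⟩⟩
    rcases hc.total hpc hqc with hpq | hqp
    · exact (Set.eq_empty_iff_forall_notMem.1 (hp q hqc).2.2) t ⟨hpq.1 htp, htq⟩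
    · exact (Set.eq_empty_iff_forall_notMem.1 (hp p hpc).2.2) t ⟨htp, hqp.2 htq⟩

theorem urqMaxFIPair_of_maximal {p : Set L × Set L} (hp : Maximal UrqFIPair p) :
    UrqMaxFIPair p := by
  refine ⟨hp.1, fun F hF hpF => ?_, fun I hI hpI => ?_⟩
  · by_contra hFI
    have hle := hp.2 (UrqFIPair.of_disjoint hF.1 hp.1.2.1.1
      (Set.not_nonempty_iff_eq_empty.1 hFI)) ⟨hpF.1, le_rfl⟩
    exact hpF.2 hle.1
  · by_contra hFI
    have hle := hp.2 (UrqFIPair.of_disjoint hp.1.1.1 hI.1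
      (Set.not_nonempty_iff_eq_empty.1 hFI)) ⟨le_rfl, hpI.1⟩
    exact hpI.2 hle.2

theorem exists_urqMaxFIPair_le {p : Set L × Set L} (hp : UrqFIPair p) :
    ∃ q, UrqMaxFIPair q ∧ p ≤ q := by
  obtain ⟨q, hpq, hq⟩ := zorn_le_nonempty₀ {q | UrqFIPair q}
    (fun c hcS hc y hy => ⟨_, .sUnion_of_isChain hc ⟨y, hy⟩ hcS, fun z hz =>
      ⟨Set.subset_sUnion_of_mem ⟨z, hz, rfl⟩, Set.subset_sUnion_of_mem ⟨z, hz, rfl⟩⟩⟩) p hp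
  exact ⟨q, urqMaxFIPair_of_maximal hq, hpq⟩

theorem urqIncr_urqH (a : L) : UrqIncr UrqLe1 (UrqH a) :=
  fun _ _ hx hxy => hxy hx

theorem lset_rset_urqH_subset (a : L) : lset UrqLe1 (rset UrqLe2 (UrqH a)) ⊆ UrqH a := by
  intro x hx
  by_contra ha
  have hdisj : x.1.1 ∩ Set.Iic a = ∅ :=
    Set.eq_empty_iff_forall_notMem.2 fun t ⟨ht, hta⟩ => ha (x.2.1.1.1.2.1 t a ht hta)
  obtain ⟨q, hq, hxq⟩ :=
    exists_urqMaxFIPair_le (UrqFIPair.of_disjoint x.2.1.1.1 (urqIdeal_Iic a) hdisj)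
  refine hx ⟨q, hq⟩ hxq.1 fun w hqw haw => ?_
  exact (Set.eq_empty_iff_forall_notMem.1 w.2.1.2.2) a ⟨haw, hqw (hxq.2 le_rfl)⟩

end Lattice

theorem stmt7_general {L : Type*} [Lattice L] (a : L) :
    UrqStable (UrqLe1 (L := L)) (UrqLe2 (L := L)) (UrqH a) :=
  (subset_lset_rset (le2 := UrqLe2) (fun _ => subset_rfl) (urqIncr_urqH a)).antisymm
    (lset_rset_urqH_subset a)

theorem stmt7 {L : Type*} [Lattice L] [BoundedOrder L] (a : L) :
    UrqStable (UrqLe1 (L := L)) (UrqLe2 (L := L)) (UrqH a) :=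
  stmt7_general a
end

section
/- Let L be a bounded lattice and define h(a) = {x ∈ X_L : a ∈ x₁} on the set X_L of maximal filter–ideal pairs of L. Then h is injective; moreover, for all a, b ∈ L, a ≤ b if and only if h(a) ⊆ h(b). -/
lemma urq_filter_bot {L : Type*} [Lattice L] [BoundedOrder L] {F : Set L}
    (hF : UrqProperFilter F) : ⊥ ∉ F := by
  intro hbot
  exact hF.2 (Set.eq_univ_of_forall fun x => hF.1.2.1 ⊥ x hbot bot_le)

lemma urq_ideal_top {L : Type*} [Lattice L] [BoundedOrder L] {I : Set L}
    (hI : UrqProperIdeal I) : ⊤ ∉ I := by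
  intro htop
  exact hI.2 (Set.eq_univ_of_forall fun x => hI.1.2.1 ⊤ x htop le_top)

lemma urq_exists_max {L : Type*} [Lattice L] [BoundedOrder L] {a b : L} (hab : ¬ a ≤ b) :
    ∃ x : UrqXL L, a ∈ x.1.1 ∧ b ∈ x.1.2 := by
  set S : Set (Set L × Set L) := {p | UrqFIPair p ∧ a ∈ p.1 ∧ b ∈ p.2} with hS
  have hbase : ((Set.Ici a, Set.Iic b) : Set L × Set L) ∈ S := by
    refine ⟨⟨⟨⟨⟨a, le_rfl⟩, fun x y hx hxy => hx.trans hxy,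
        fun x y hx hy => le_inf hx hy⟩, ?_⟩,
      ⟨⟨⟨b, le_rfl⟩, fun x y hx hxy => hxy.trans hx,
        fun x y hx hy => sup_le hx hy⟩, ?_⟩, ?_⟩, le_rfl, le_rfl⟩
    · intro h
      exact hab (Set.eq_univ_iff_forall.mp h b)
    · intro h
      exact hab (Set.eq_univ_iff_forall.mp h a)
    · ext x
      simp only [Set.mem_inter_iff, Set.mem_Ici, Set.mem_Iic, Set.mem_empty_iff_false,
        iff_false, not_and]
      intro h1 h2
      exact hab (h1.trans h2)
  have hchain : ∀ c ⊆ S, IsChain (· ≤ ·) c → ∀ y ∈ c,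
      ∃ ub ∈ S, ∀ z ∈ c, z ≤ ub := by
    intro c hcS hc y hy
    refine ⟨(⋃ p ∈ c, p.1, ⋃ p ∈ c, p.2), ⟨⟨⟨⟨?_, ?_, ?_⟩, ?_⟩, ⟨⟨?_, ?_, ?_⟩, ?_⟩, ?_⟩, ?_, ?_⟩,
      fun z hz => ⟨Set.subset_biUnion_of_mem hz, Set.subset_biUnion_of_mem hz⟩⟩
    · exact ⟨a, Set.mem_biUnion hy (hcS hy).2.1⟩
    · rintro x z hx hxz
      simp only [Set.mem_iUnion] at hx ⊢
      obtain ⟨p, hp, hxp⟩ := hx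
      exact ⟨p, hp, (hcS hp).1.1.1.2.1 x z hxp hxz⟩
    · rintro x z hx hz
      simp only [Set.mem_iUnion] at hx hz ⊢
      obtain ⟨p, hp, hxp⟩ := hx
      obtain ⟨q, hq, hzq⟩ := hz
      rcases hc.total hp hq with hpq | hqp
      · exact ⟨q, hq, (hcS hq).1.1.1.2.2 x z (hpq.1 hxp) hzq⟩
      · exact ⟨p, hp, (hcS hp).1.1.1.2.2 x z hxp (hqp.1 hzq)⟩
    · intro h
      have : (⊥ : L) ∈ ⋃ p ∈ c, p.1 := Set.eq_univ_iff_forall.mp h ⊥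
      simp only [Set.mem_iUnion] at this
      obtain ⟨p, hp, hbp⟩ := this
      exact urq_filter_bot (hcS hp).1.1 hbp
    · exact ⟨b, Set.mem_biUnion hy (hcS hy).2.2⟩
    · rintro x z hx hxz
      simp only [Set.mem_iUnion] at hx ⊢
      obtain ⟨p, hp, hxp⟩ := hx
      exact ⟨p, hp, (hcS hp).1.2.1.1.2.1 x z hxp hxz⟩
    · rintro x z hx hz
      simp only [Set.mem_iUnion] at hx hz ⊢
      obtain ⟨p, hp, hxp⟩ := hx
      obtain ⟨q, hq, hzq⟩ := hz
      rcases hc.total hp hq with hpq | hqp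
      · exact ⟨q, hq, (hcS hq).1.2.1.1.2.2 x z (hpq.2 hxp) hzq⟩
      · exact ⟨p, hp, (hcS hp).1.2.1.1.2.2 x z hxp (hqp.2 hzq)⟩
    · intro h
      have : (⊤ : L) ∈ ⋃ p ∈ c, p.2 := Set.eq_univ_iff_forall.mp h ⊤
      simp only [Set.mem_iUnion] at this
      obtain ⟨p, hp, hbp⟩ := this
      exact urq_ideal_top (hcS hp).1.2.1 hbp
    · ext x
      simp only [Set.mem_inter_iff, Set.mem_iUnion, Set.mem_empty_iff_false, iff_false, not_and]
      rintro ⟨p, hp, hxp⟩ ⟨q, hq, hxq⟩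
      rcases hc.total hp hq with hpq | hqp
      · have : x ∈ q.1 ∩ q.2 := ⟨hpq.1 hxp, hxq⟩
        rw [(hcS hq).1.2.2] at this; exact this
      · have : x ∈ p.1 ∩ p.2 := ⟨hxp, hqp.2 hxq⟩
        rw [(hcS hp).1.2.2] at this; exact this
    · exact Set.mem_biUnion hy (hcS hy).2.1
    · exact Set.mem_biUnion hy (hcS hy).2.2
  obtain ⟨m, -, hmS, hmax⟩ := zorn_le_nonempty₀ S hchain (Set.Ici a, Set.Iic b) hbase
  refine ⟨⟨m, hmS.1, ?_, ?_⟩, hmS.2.1, hmS.2.2⟩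
  · intro F' hF' hsub
    by_contra hne
    rw [Set.not_nonempty_iff_eq_empty] at hne
    have : (F', m.2) ∈ S := ⟨⟨hF', hmS.1.2.1, hne⟩, hsub.1 hmS.2.1, hmS.2.2⟩
    have := hmax this ⟨hsub.1, le_rfl⟩
    exact hsub.2 this.1
  · intro I' hI' hsub
    by_contra hne
    rw [Set.not_nonempty_iff_eq_empty] at hne
    have hne' : m.1 ∩ I' = ∅ := hne
    have : (m.1, I') ∈ S := ⟨⟨hmS.1.1, hI', hne'⟩, hmS.2.1, hsub.1 hmS.2.2⟩
    have := hmax this ⟨le_rfl, hsub.1⟩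
    exact hsub.2 this.2

theorem stmt8 {L : Type*} [Lattice L] [BoundedOrder L] :
    Function.Injective (UrqH (L := L)) ∧
    (∀ a b : L, a ≤ b ↔ UrqH a ⊆ UrqH b) := by
  have key : ∀ a b : L, a ≤ b ↔ UrqH a ⊆ UrqH b := by
    intro a b
    constructor
    · intro hab x hx
      exact x.2.1.1.1.2.1 a b hx hab
    · intro hsub
      by_contra hab
      obtain ⟨x, ha, hb⟩ := urq_exists_max hab
      have : b ∈ x.1.1 ∩ x.1.2 := ⟨hsub ha, hb⟩
      rw [x.2.1.2.2] at this; exact this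
  exact ⟨fun a b h => le_antisymm ((key a b).2 (h ▸ subset_rfl))
    ((key b a).2 (h ▸ subset_rfl)), key⟩
end

section
/- Let L be a bounded lattice, X_L its set of maximal filter–ideal pairs with quasiorders x ≤ᵢ y iff xᵢ ⊆ yᵢ, and define h(a) = {x ∈ X_L : a ∈ x₁}. Then for all a, b ∈ L, h(a ⊔ b) = l(r(h(a) ∪ h(b))), i.e., h sends joins in L to joins in the lattice of stable sets of (X_L, ≤₁, ≤₂). -/
section Aux

variable {L : Type*} [Lattice L] [BoundedOrder L]

lemma urq_top_mem {F : Set L} (hF : UrqFilter F) : ⊤ ∈ F := by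
  obtain ⟨⟨a, ha⟩, hup, -⟩ := hF
  exact hup a ⊤ ha le_top

lemma urq_bot_mem {I : Set L} (hI : UrqIdeal I) : ⊥ ∈ I := by
  obtain ⟨⟨a, ha⟩, hdn, -⟩ := hI
  exact hdn a ⊥ ha bot_le

lemma urq_disj {F I : Set L} (h : F ∩ I = ∅) {a : L} (haF : a ∈ F) (haI : a ∈ I) : False := by
  have := Set.eq_empty_iff_forall_notMem.1 h a
  exact this ⟨haF, haI⟩

/-- Every disjoint proper filter–ideal pair extends to a maximal pair. -/
lemma urq_exists_ext {F I : Set L} (hF : UrqProperFilter F) (hI : UrqProperIdeal I)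
    (hd : F ∩ I = ∅) : ∃ z : UrqXL L, F ⊆ z.1.1 ∧ I ⊆ z.1.2 := by
  set S : Set (Set L × Set L) := {p | UrqFIPair p} with hS
  have hFI : ((F, I) : Set L × Set L) ∈ S := ⟨hF, hI, hd⟩
  have hchain : ∀ c ⊆ S, IsChain (· ≤ ·) c → ∀ y ∈ c, ∃ ub ∈ S, ∀ z ∈ c, z ≤ ub := ?_
  obtain ⟨m, hm, hmax⟩ := zorn_le_nonempty₀ S hchain (F, I) hFI
  · refine ⟨⟨m, hmax.1, ?_, ?_⟩, hm.1, hm.2⟩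
    · intro F' hF' hss
      by_contra hne
      rw [Set.not_nonempty_iff_eq_empty] at hne
      have hmem : ((F', m.2) : Set L × Set L) ∈ S := ⟨hF', hmax.1.2.1, hne⟩
      have : (F', m.2) ≤ m := hmax.2 hmem ⟨le_of_lt hss, le_refl _⟩
      exact (not_subset_of_ssubset hss) this.1
    · intro I' hI' hss
      by_contra hne
      rw [Set.not_nonempty_iff_eq_empty] at hne
      have hmem : ((m.1, I') : Set L × Set L) ∈ S := ⟨hmax.1.1, hI', hne⟩
      have : (m.1, I') ≤ m := hmax.2 hmem ⟨le_refl _, le_of_lt hss⟩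
      exact (not_subset_of_ssubset hss) this.2
  · -- chains have upper bounds in S
    intro c hcS hc y hyc
    refine ⟨(⋃ p ∈ c, p.1, ⋃ p ∈ c, p.2), ⟨⟨⟨⟨⊤, ?_⟩, ?_, ?_⟩, ?_⟩, ⟨⟨⟨⊥, ?_⟩, ?_, ?_⟩, ?_⟩, ?_⟩,
      fun p hp => ⟨?_, ?_⟩⟩
    · exact Set.mem_biUnion hyc (urq_top_mem (hcS hyc).1.1)
    · rintro a b ha hab
      simp only [Set.mem_iUnion] at ha ⊢
      obtain ⟨p, hp, hap⟩ := ha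
      exact ⟨p, hp, (hcS hp).1.1.2.1 a b hap hab⟩
    · rintro a b ha hb
      simp only [Set.mem_iUnion] at ha hb ⊢
      obtain ⟨p, hp, hap⟩ := ha
      obtain ⟨q, hq, hbq⟩ := hb
      rcases hc.total hp hq with h | h
      · exact ⟨q, hq, (hcS hq).1.1.2.2 a b (h.1 hap) hbq⟩
      · exact ⟨p, hp, (hcS hp).1.1.2.2 a b hap (h.1 hbq)⟩
    · -- union of filters proper : ⊥ not in it
      intro h
      have hbot : (⊥ : L) ∈ ⋃ p ∈ c, p.1 := Set.eq_univ_iff_forall.mp h ⊥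
      simp only [Set.mem_iUnion] at hbot
      obtain ⟨p, hp, hbp⟩ := hbot
      exact urq_disj (hcS hp).2.2 hbp (urq_bot_mem (hcS hp).2.1.1)
    · exact Set.mem_biUnion hyc (urq_bot_mem (hcS hyc).2.1.1)
    · rintro a b ha hab
      simp only [Set.mem_iUnion] at ha ⊢
      obtain ⟨p, hp, hap⟩ := ha
      exact ⟨p, hp, (hcS hp).2.1.1.2.1 a b hap hab⟩
    · rintro a b ha hb
      simp only [Set.mem_iUnion] at ha hb ⊢
      obtain ⟨p, hp, hap⟩ := ha
      obtain ⟨q, hq, hbq⟩ := hb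
      rcases hc.total hp hq with h | h
      · exact ⟨q, hq, (hcS hq).2.1.1.2.2 a b (h.2 hap) hbq⟩
      · exact ⟨p, hp, (hcS hp).2.1.1.2.2 a b hap (h.2 hbq)⟩
    · intro h
      have htop : (⊤ : L) ∈ ⋃ p ∈ c, p.2 := Set.eq_univ_iff_forall.mp h ⊤
      simp only [Set.mem_iUnion] at htop
      obtain ⟨p, hp, hbp⟩ := htop
      exact urq_disj (hcS hp).2.2 (urq_top_mem (hcS hp).1.1) hbp
    · -- disjointness of unions
      rw [Set.eq_empty_iff_forall_notMem]
      rintro a ⟨ha1, ha2⟩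
      simp only [Set.mem_iUnion] at ha1 ha2
      obtain ⟨p, hp, hap⟩ := ha1
      obtain ⟨q, hq, haq⟩ := ha2
      rcases hc.total hp hq with h | h
      · exact urq_disj (hcS hq).2.2 (h.1 hap) haq
      · exact urq_disj (hcS hp).2.2 hap (h.2 haq)
    · exact Set.subset_biUnion_of_mem hp
    · exact Set.subset_biUnion_of_mem hp

end Aux

theorem stmt10 {L : Type*} [Lattice L] [BoundedOrder L] (a b : L) :
    UrqH (a ⊔ b) = lset (UrqLe1 (L := L)) (rset (UrqLe2 (L := L)) (UrqH a ∪ UrqH b)) := by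
  ext x
  constructor
  · intro hx z hz hzr
    -- hx : a ⊔ b ∈ x₁, hz : x₁ ⊆ z₁, hzr : z ∈ r(h a ∪ h b)
    have hab : a ⊔ b ∈ z.1.1 := hz hx
    obtain ⟨⟨hzF, -⟩, ⟨hzI, hzIne⟩, hzd⟩ := z.2.1
    -- one of a, b is not in z₂
    have hone : a ∉ z.1.2 ∨ b ∉ z.1.2 := by
      by_contra h
      push_neg at h
      exact urq_disj hzd hab (hzI.2.2 a b h.1 h.2)
    obtain ⟨c, hcz, hcY⟩ : ∃ c : L, c ∉ z.1.2 ∧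
        ∀ w : UrqXL L, c ∈ w.1.1 → w ∈ UrqH a ∪ UrqH b := by
      rcases hone with h | h
      · exact ⟨a, h, fun w hw => Or.inl hw⟩
      · exact ⟨b, h, fun w hw => Or.inr hw⟩
    -- extend (↑c, z₂) to a maximal pair
    have hFc : UrqProperFilter (Set.Ici c) := by
      refine ⟨⟨⟨c, le_refl c⟩, fun p q hp hpq => le_trans hp hpq,
        fun p q hp hq => le_inf hp hq⟩, ?_⟩
      intro h
      have : c ≤ ⊥ := Set.eq_univ_iff_forall.mp h ⊥
      exact hcz (hzI.2.1 ⊥ c (urq_bot_mem hzI) this)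
    have hdisj : Set.Ici c ∩ z.1.2 = ∅ := by
      rw [Set.eq_empty_iff_forall_notMem]
      rintro d ⟨hd1, hd2⟩
      exact hcz (hzI.2.1 d c hd2 hd1)
    obtain ⟨w, hw1, hw2⟩ := urq_exists_ext hFc ⟨hzI, hzIne⟩ hdisj
    exact hzr w hw2 (hcY w (hw1 (le_refl c)))
  · intro hx
    by_contra hab
    -- hab : a ⊔ b ∉ x₁; extend (x₁, ↓(a⊔b)) to a maximal pair z
    obtain ⟨⟨⟨hxF, hxFne⟩, hxI, hxd⟩, -⟩ := x.2
    have hIab : UrqProperIdeal (Set.Iic (a ⊔ b)) := by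
      refine ⟨⟨⟨a ⊔ b, le_refl _⟩, fun p q hp hqp => le_trans hqp hp,
        fun p q hp hq => sup_le hp hq⟩, ?_⟩
      intro h
      have : ⊤ ≤ a ⊔ b := Set.eq_univ_iff_forall.mp h ⊤
      exact hab (hxF.2.1 ⊤ (a ⊔ b) (urq_top_mem hxF) this)
    have hdisj : x.1.1 ∩ Set.Iic (a ⊔ b) = ∅ := by
      rw [Set.eq_empty_iff_forall_notMem]
      rintro d ⟨hd1, hd2⟩
      exact hab (hxF.2.1 d (a ⊔ b) hd1 hd2)
    obtain ⟨z, hz1, hz2⟩ := urq_exists_ext ⟨hxF, hxFne⟩ hIab hdisj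
    have habz : a ⊔ b ∈ z.1.2 := hz2 (le_refl _)
    refine hx z hz1 ?_
    intro w hw hwY
    obtain ⟨⟨hwF, -⟩, -, hwd⟩ := w.2.1
    have habw : a ⊔ b ∈ w.1.2 := hw habz
    rcases hwY with hwa | hwb
    · exact urq_disj hwd (hwF.2.1 a (a ⊔ b) hwa le_sup_left) habw
    · exact urq_disj hwd (hwF.2.1 b (a ⊔ b) hwb le_sup_right) habw
end

section
/- Let L be a bounded lattice and X_L its set of maximal filter–ideal pairs with x ≤₁ y iff x₁ ⊆ y₁ and x ≤₂ y iff x₂ ⊆ y₂. Then (X_L, ≤₁, ≤₂) is a doubly ordered frame: ≤₁ and ≤₂ are preorders, and if x₁ ⊆ y₁ and x₂ ⊆ y₂ for maximal pairs x, y, then x = y. -/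
theorem stmt12 {L : Type*} [Lattice L] [BoundedOrder L] :
    DoublyOrdered (UrqLe1 (L := L)) (UrqLe2 (L := L)) := by
  refine ⟨fun x => subset_rfl, fun x y z h1 h2 => h1.trans h2,
    fun x => subset_rfl, fun x y z h1 h2 => h1.trans h2, fun x y h1 h2 => ?_⟩
  have hxm := x.2
  have hym := y.2
  have e1 : x.1.1 = y.1.1 := by
    by_contra hne
    have hss : x.1.1 ⊂ y.1.1 := ⟨h1, fun h => hne (le_antisymm h1 h)⟩
    obtain ⟨a, ha1, ha2⟩ := hxm.2.1 y.1.1 hym.1.1 hss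
    have : a ∈ y.1.1 ∩ y.1.2 := ⟨ha1, h2 ha2⟩
    rw [hym.1.2.2] at this
    exact this
  have e2 : x.1.2 = y.1.2 := by
    by_contra hne
    have hss : x.1.2 ⊂ y.1.2 := ⟨h2, fun h => hne (le_antisymm h2 h)⟩
    obtain ⟨a, ha1, ha2⟩ := hxm.2.2 y.1.2 hym.1.2.1 hss
    have : a ∈ y.1.1 ∩ y.1.2 := ⟨h1 ha1, ha2⟩
    rw [hym.1.2.2] at this
    exact this
  exact Subtype.ext (Prod.ext e1 e2)
end

section
/- Let L be a bounded lattice and X_L its set of maximal filter–ideal pairs with x ≤₁ y iff x₁ ⊆ y₁ and x ≤₂ y iff x₂ ⊆ y₂. Then every x ∈ X_L lies below a ≤₁-maximal element of X_L and below a ≤₂-maximal element of X_L. -/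
section Aux
variable {L : Type*} [Lattice L] [BoundedOrder L]

lemma urq_bot_notMem {F : Set L} (hF : UrqProperFilter F) : ⊥ ∉ F := by
  intro h
  exact hF.2 (Set.eq_univ_of_forall fun b => hF.1.2.1 ⊥ b h bot_le)

lemma urq_top_notMem {I : Set L} (hI : UrqProperIdeal I) : ⊤ ∉ I := by
  intro h
  exact hI.2 (Set.eq_univ_of_forall fun b => hI.1.2.1 ⊤ b h le_top)

/-- Union of a nonempty chain of proper filters is a proper filter. -/
lemma urq_chain_filter (c : Set (Set L)) (hc : IsChain (· ⊆ ·) c)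
    (hcf : ∀ F ∈ c, UrqProperFilter F) (hne : c.Nonempty) :
    UrqProperFilter (⋃₀ c) := by
  obtain ⟨F0, hF0⟩ := hne
  refine ⟨⟨⟨(hcf F0 hF0).1.1.choose, F0, hF0, (hcf F0 hF0).1.1.choose_spec⟩, ?_, ?_⟩, ?_⟩
  · rintro a b ⟨F, hF, haF⟩ hab
    exact ⟨F, hF, (hcf F hF).1.2.1 a b haF hab⟩
  · rintro a b ⟨F, hF, haF⟩ ⟨G, hG, hbG⟩
    rcases hc.total hF hG with h | h
    · exact ⟨G, hG, (hcf G hG).1.2.2 a b (h haF) hbG⟩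
    · exact ⟨F, hF, (hcf F hF).1.2.2 a b haF (h hbG)⟩
  · intro h
    have : (⊥ : L) ∈ ⋃₀ c := h ▸ Set.mem_univ _
    obtain ⟨F, hF, hb⟩ := this
    exact urq_bot_notMem (hcf F hF) hb

lemma urq_chain_ideal (c : Set (Set L)) (hc : IsChain (· ⊆ ·) c)
    (hcf : ∀ I ∈ c, UrqProperIdeal I) (hne : c.Nonempty) :
    UrqProperIdeal (⋃₀ c) := by
  obtain ⟨F0, hF0⟩ := hne
  refine ⟨⟨⟨(hcf F0 hF0).1.1.choose, F0, hF0, (hcf F0 hF0).1.1.choose_spec⟩, ?_, ?_⟩, ?_⟩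
  · rintro a b ⟨F, hF, haF⟩ hab
    exact ⟨F, hF, (hcf F hF).1.2.1 a b haF hab⟩
  · rintro a b ⟨F, hF, haF⟩ ⟨G, hG, hbG⟩
    rcases hc.total hF hG with h | h
    · exact ⟨G, hG, (hcf G hG).1.2.2 a b (h haF) hbG⟩
    · exact ⟨F, hF, (hcf F hF).1.2.2 a b haF (h hbG)⟩
  · intro h
    have : (⊤ : L) ∈ ⋃₀ c := h ▸ Set.mem_univ _
    obtain ⟨F, hF, hb⟩ := this
    exact urq_top_notMem (hcf F hF) hb

/-- Every FI pair extends to a maximal FI pair. -/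
lemma urq_extend_max (p : Set L × Set L) (hp : UrqFIPair p) :
    ∃ q : Set L × Set L, UrqMaxFIPair q ∧ p.1 ⊆ q.1 ∧ p.2 ⊆ q.2 := by
  have hchain : ∀ c ⊆ {q : Set L × Set L | UrqFIPair q}, IsChain (· ≤ ·) c → ∀ y ∈ c,
      ∃ ub ∈ {q : Set L × Set L | UrqFIPair q}, ∀ z ∈ c, z ≤ ub := by
    intro c hcs hc y hy
    refine ⟨(⋃₀ (Prod.fst '' c), ⋃₀ (Prod.snd '' c)), ⟨?_, ?_, ?_⟩, ?_⟩
    · refine urq_chain_filter _ ?_ ?_ ⟨y.1, y, hy, rfl⟩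
      · rintro _ ⟨a, ha, rfl⟩ _ ⟨b, hb, rfl⟩ hne
        rcases hc.total ha hb with h | h
        · exact Or.inl h.1
        · exact Or.inr h.1
      · rintro _ ⟨a, ha, rfl⟩; exact (hcs ha).1
    · refine urq_chain_ideal _ ?_ ?_ ⟨y.2, y, hy, rfl⟩
      · rintro _ ⟨a, ha, rfl⟩ _ ⟨b, hb, rfl⟩ hne
        rcases hc.total ha hb with h | h
        · exact Or.inl h.2
        · exact Or.inr h.2
      · rintro _ ⟨a, ha, rfl⟩; exact (hcs ha).2.1
    · apply Set.eq_empty_iff_forall_notMem.2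
      rintro a ⟨⟨_, ⟨q, hq, rfl⟩, haq⟩, ⟨_, ⟨r, hr, rfl⟩, har⟩⟩
      rcases hc.total hq hr with h | h
      · exact Set.eq_empty_iff_forall_notMem.1 (hcs hr).2.2 a ⟨h.1 haq, har⟩
      · exact Set.eq_empty_iff_forall_notMem.1 (hcs hq).2.2 a ⟨haq, h.2 har⟩
    · intro z hz
      exact ⟨Set.subset_sUnion_of_mem ⟨z, hz, rfl⟩, Set.subset_sUnion_of_mem ⟨z, hz, rfl⟩⟩
  obtain ⟨m, hpm, hm⟩ := zorn_le_nonempty₀ {q : Set L × Set L | UrqFIPair q} hchain p hp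
  · refine ⟨m, ⟨hm.1, ?_, ?_⟩, hpm.1, hpm.2⟩
    · intro F' hF' hss
      by_contra hne
      rw [Set.not_nonempty_iff_eq_empty] at hne
      have : UrqFIPair (F', m.2) := ⟨hF', hm.1.2.1, hne⟩
      have hle : m ≤ (F', m.2) := ⟨hss.1, le_rfl⟩
      exact hss.2 (hm.2 this hle).1
    · intro I' hI' hss
      by_contra hne
      rw [Set.not_nonempty_iff_eq_empty] at hne
      have : UrqFIPair (m.1, I') := ⟨hm.1.1, hI', hne⟩
      have hle : m ≤ (m.1, I') := ⟨le_rfl, hss.1⟩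
      exact hss.2 (hm.2 this hle).2

lemma urq_exists_disjoint_ideal {F : Set L} (hF : UrqProperFilter F) :
    ∃ I, UrqProperIdeal I ∧ F ∩ I = ∅ := by
  obtain ⟨a, ha⟩ : ∃ a, a ∉ F := by
    by_contra h; push_neg at h
    exact hF.2 (Set.eq_univ_of_forall h)
  refine ⟨{b | b ≤ a}, ⟨⟨⟨a, le_rfl⟩, fun u v hu hv => le_trans hv hu,
      fun u v hu hv => sup_le hu hv⟩, ?_⟩, ?_⟩
  · intro h
    have hta : (⊤ : L) ∈ {b | b ≤ a} := h ▸ Set.mem_univ (⊤ : L)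
    obtain ⟨t, ht⟩ := hF.1.1
    exact ha (hF.1.2.1 t a ht (le_top.trans hta))
  · ext b
    simp only [Set.mem_inter_iff, Set.mem_setOf_eq, Set.mem_empty_iff_false, iff_false, not_and]
    intro hb hba
    exact ha (hF.1.2.1 b a hb hba)

lemma urq_exists_disjoint_filter {I : Set L} (hI : UrqProperIdeal I) :
    ∃ F, UrqProperFilter F ∧ F ∩ I = ∅ := by
  obtain ⟨a, ha⟩ : ∃ a, a ∉ I := by
    by_contra h; push_neg at h
    exact hI.2 (Set.eq_univ_of_forall h)
  refine ⟨{b | a ≤ b}, ⟨⟨⟨a, le_rfl⟩, fun u v hu hv => le_trans hu hv,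
      fun u v hu hv => le_inf hu hv⟩, ?_⟩, ?_⟩
  · intro h
    have hab : (⊥ : L) ∈ {b | a ≤ b} := h ▸ Set.mem_univ (⊥ : L)
    obtain ⟨t, ht⟩ := hI.1.1
    exact ha (hI.1.2.1 t a ht ((show a ≤ ⊥ from hab).trans bot_le))
  · ext b
    simp only [Set.mem_inter_iff, Set.mem_setOf_eq, Set.mem_empty_iff_false, iff_false, not_and]
    intro hb hbI
    exact ha (hI.1.2.1 b a hbI hb)

end Aux

theorem stmt13 {L : Type*} [Lattice L] [BoundedOrder L] (x : UrqXL L) :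
    (∃ m : UrqXL L, UrqLe1 x m ∧ ∀ y, UrqLe1 m y → UrqLe1 y m) ∧
    (∃ m : UrqXL L, UrqLe2 x m ∧ ∀ y, UrqLe2 m y → UrqLe2 y m) := by
  constructor
  · obtain ⟨Fm, hxF, hFmax⟩ := zorn_subset_nonempty {F : Set L | UrqProperFilter F}
      (fun c hcs hc hne => ⟨⋃₀ c, urq_chain_filter c hc hcs hne,
        fun s hs => Set.subset_sUnion_of_mem hs⟩) x.1.1 x.2.1.1
    obtain ⟨I, hI, hFI⟩ := urq_exists_disjoint_ideal hFmax.1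
    obtain ⟨q, hq, hq1, _⟩ := urq_extend_max (Fm, I) ⟨hFmax.1, hI, hFI⟩
    have hqF : q.1 = Fm := (hFmax.2 hq.1.1 hq1).antisymm hq1
    refine ⟨⟨q, hq⟩, ?_, ?_⟩
    · show x.1.1 ⊆ q.1; rw [hqF]; exact hxF
    · intro y hy
      show y.1.1 ⊆ q.1
      have : Fm ⊆ y.1.1 := hqF ▸ hy
      rw [hqF]
      exact (hFmax.2 y.2.1.1 this)
  · obtain ⟨Im, hxI, hImax⟩ := zorn_subset_nonempty {I : Set L | UrqProperIdeal I}
      (fun c hcs hc hne => ⟨⋃₀ c, urq_chain_ideal c hc hcs hne,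
        fun s hs => Set.subset_sUnion_of_mem hs⟩) x.1.2 x.2.1.2.1
    obtain ⟨F, hF, hFI⟩ := urq_exists_disjoint_filter hImax.1
    obtain ⟨q, hq, _, hq2⟩ := urq_extend_max (F, Im) ⟨hF, hImax.1, hFI⟩
    have hqI : q.2 = Im := (hImax.2 hq.1.2.1 hq2).antisymm hq2
    refine ⟨⟨q, hq⟩, ?_, ?_⟩
    · show x.1.2 ⊆ q.2; rw [hqI]; exact hxI
    · intro y hy
      show y.1.2 ⊆ q.2
      have : Im ⊆ y.1.2 := hqI ▸ hy
      rw [hqI]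
      exact (hImax.2 y.2.1.2.1 this)
end

section
/- Let L be a bounded lattice and X_L its set of maximal filter–ideal pairs with x ≤₁ y iff x₁ ⊆ y₁ and x ≤₂ y iff x₂ ⊆ y₂. Then (X_L, ≤₁, ≤₂) satisfies condition LF₁: for all x, y ∈ X_L, if x ≰₁ y then there exists z ∈ X_L with y ≤₁ z such that for all w ∈ X_L, x ≤₁ w implies z ≰₂ w. -/
/-- Condition LF₀: each element is below a `≤₁`-maximal one and a `≤₂`-maximal one. -/
def UrqLF0 {X : Type*} (le1 le2 : X → X → Prop) : Prop :=
  ∀ x, (∃ m, le1 x m ∧ ∀ y, le1 m y → le1 y m) ∧ (∃ m, le2 x m ∧ ∀ y, le2 m y → le2 y m)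

/-- Condition LF₁. -/
def UrqLF1 {X : Type*} (le1 le2 : X → X → Prop) : Prop :=
  ∀ x y, ¬ le1 x y → ∃ z, le1 y z ∧ ∀ w, le1 x w → ¬ le2 z w

/-- Condition LF₂. -/
def UrqLF2 {X : Type*} (le1 le2 : X → X → Prop) : Prop :=
  ∀ x y, ¬ le2 x y → ∃ z, le2 y z ∧ ∀ w, le2 x w → ¬ le1 z w

/-- A lattice frame: a doubly ordered frame satisfying LF₀, LF₁, LF₂. -/
def LatticeFrame {X : Type*} (le1 le2 : X → X → Prop) : Prop :=
  DoublyOrdered le1 le2 ∧ UrqLF0 le1 le2 ∧ UrqLF1 le1 le2 ∧ UrqLF2 le1 le2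

theorem urq_extend {L : Type*} [Lattice L] [BoundedOrder L] (p : Set L × Set L)
    (hp : UrqFIPair p) : ∃ q, UrqMaxFIPair q ∧ p.1 ⊆ q.1 ∧ p.2 ⊆ q.2 := by
  obtain ⟨m, hpm, hmS, hmax⟩ := zorn_le_nonempty₀ {q : Set L × Set L | UrqFIPair q}
    (fun c hcS hc y hyc => by
      refine ⟨(⋃ q ∈ c, q.1, ⋃ q ∈ c, q.2), ?_, ?_⟩
      · obtain ⟨⟨⟨hyne, hyup, hymeet⟩, hyprop⟩, ⟨⟨iyne, iydn, iyjoin⟩, iyprop⟩, hydis⟩ := hcS hyc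
        refine ⟨⟨⟨⟨hyne.choose, Set.mem_biUnion hyc hyne.choose_spec⟩, ?_, ?_⟩, ?_⟩,
          ⟨⟨⟨iyne.choose, Set.mem_biUnion hyc iyne.choose_spec⟩, ?_, ?_⟩, ?_⟩, ?_⟩
        · rintro a b ha hab
          simp only [Set.mem_iUnion] at ha ⊢
          obtain ⟨q, hq, haq⟩ := ha
          exact ⟨q, hq, ((hcS hq).1.1.2.1) a b haq hab⟩
        · rintro a b ha hb
          simp only [Set.mem_iUnion] at ha hb ⊢
          obtain ⟨q, hq, haq⟩ := ha
          obtain ⟨q', hq', hbq⟩ := hb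
          rcases hc.total hq hq' with h | h
          · exact ⟨q', hq', (hcS hq').1.1.2.2 a b (h.1 haq) hbq⟩
          · exact ⟨q, hq, (hcS hq).1.1.2.2 a b haq (h.1 hbq)⟩
        · intro h
          have : (⊥ : L) ∈ ⋃ q ∈ c, q.1 := by rw [show (⋃ q ∈ c, q.1) = ((⋃ q ∈ c, q.1, ⋃ q ∈ c, q.2) : Set L × Set L).1 from rfl, h]; trivial
          simp only [Set.mem_iUnion] at this
          obtain ⟨q, hq, hbot⟩ := this
          exact (hcS hq).1.2 (Set.eq_univ_of_forall fun b =>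
            (hcS hq).1.1.2.1 ⊥ b hbot bot_le)
        · rintro a b ha hab
          simp only [Set.mem_iUnion] at ha ⊢
          obtain ⟨q, hq, haq⟩ := ha
          exact ⟨q, hq, ((hcS hq).2.1.1.2.1) a b haq hab⟩
        · rintro a b ha hb
          simp only [Set.mem_iUnion] at ha hb ⊢
          obtain ⟨q, hq, haq⟩ := ha
          obtain ⟨q', hq', hbq⟩ := hb
          rcases hc.total hq hq' with h | h
          · exact ⟨q', hq', (hcS hq').2.1.1.2.2 a b (h.2 haq) hbq⟩
          · exact ⟨q, hq, (hcS hq).2.1.1.2.2 a b haq (h.2 hbq)⟩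
        · intro h
          have : (⊤ : L) ∈ ⋃ q ∈ c, q.2 := by rw [show (⋃ q ∈ c, q.2) = ((⋃ q ∈ c, q.1, ⋃ q ∈ c, q.2) : Set L × Set L).2 from rfl, h]; trivial
          simp only [Set.mem_iUnion] at this
          obtain ⟨q, hq, htop⟩ := this
          exact (hcS hq).2.1.2 (Set.eq_univ_of_forall fun b =>
            (hcS hq).2.1.1.2.1 ⊤ b htop le_top)
        · ext b
          simp only [Set.mem_inter_iff, Set.mem_iUnion, Set.mem_empty_iff_false, iff_false,
            not_and]
          rintro ⟨q, hq, hbq⟩ ⟨q', hq', hbq'⟩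
          rcases hc.total hq hq' with h | h
          · have : b ∈ q'.1 ∩ q'.2 := ⟨h.1 hbq, hbq'⟩
            rw [(hcS hq').2.2] at this; exact this
          · have : b ∈ q.1 ∩ q.2 := ⟨hbq, h.2 hbq'⟩
            rw [(hcS hq).2.2] at this; exact this
      · intro z hz
        exact ⟨Set.subset_biUnion_of_mem hz, Set.subset_biUnion_of_mem hz⟩) p hp
  refine ⟨m, ⟨hmS, ?_, ?_⟩, hpm.1, hpm.2⟩
  · intro F' hF' hss
    by_contra hne
    rw [Set.not_nonempty_iff_eq_empty] at hne
    have hin : (F', m.2) ∈ {q : Set L × Set L | UrqFIPair q} := ⟨hF', hmS.2.1, hne⟩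
    have hle : m ≤ (F', m.2) := ⟨hss.1, le_refl _⟩
    have := hmax hin hle
    exact hss.2 this.1
  · intro I' hI' hss
    by_contra hne
    rw [Set.not_nonempty_iff_eq_empty] at hne
    have hin : (m.1, I') ∈ {q : Set L × Set L | UrqFIPair q} := ⟨hmS.1, hI', hne⟩
    have hle : m ≤ (m.1, I') := ⟨le_refl _, hss.1⟩
    have := hmax hin hle
    exact hss.2 this.2

theorem stmt14 {L : Type*} [Lattice L] [BoundedOrder L] :
    UrqLF1 (UrqLe1 (L := L)) (UrqLe2 (L := L)) := by
  intro x y h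
  rw [UrqLe1, Set.not_subset] at h
  obtain ⟨a, hax, hay⟩ := h
  have hyF := y.2.1.1
  have htop : (⊤ : L) ∈ y.1.1 := hyF.1.2.1 _ ⊤ hyF.1.1.choose_spec le_top
  have haT : a ≠ ⊤ := fun e => hay (e ▸ htop)
  have hp : UrqFIPair ((y.1.1, {b : L | b ≤ a}) : Set L × Set L) := by
    refine ⟨hyF, ⟨⟨⟨a, le_refl a⟩, fun b c hb hcb => le_trans hcb hb,
      fun b c hb hc => sup_le hb hc⟩, ?_⟩, ?_⟩
    · intro hu
      exact haT (top_le_iff.1 (Set.eq_univ_iff_forall.mp hu ⊤))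
    · ext b
      simp only [Set.mem_inter_iff, Set.mem_setOf_eq, Set.mem_empty_iff_false, iff_false, not_and]
      intro hb hba
      exact hay (hyF.1.2.1 b a hb hba)
  obtain ⟨q, hq, h1, h2⟩ := urq_extend _ hp
  refine ⟨⟨q, hq⟩, h1, fun w hw hzw => ?_⟩
  have haw1 : a ∈ w.1.1 := hw hax
  have haw2 : a ∈ w.1.2 := hzw (h2 (le_refl a))
  have := w.2.1.2.2
  have : a ∈ w.1.1 ∩ w.1.2 := ⟨haw1, haw2⟩
  rw [w.2.1.2.2] at this
  exact this
end

section
/- Let L be a bounded lattice and X_L its set of maximal filter–ideal pairs with x ≤₁ y iff x₁ ⊆ y₁ and x ≤₂ y iff x₂ ⊆ y₂. Then (X_L, ≤₁, ≤₂) satisfies condition LF₂: for all x, y ∈ X_L, if x ≰₂ y then there exists z ∈ X_L with y ≤₂ z such that for all w ∈ X_L, x ≤₂ w implies z ≰₁ w. -/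
lemma urq_extend_filter {L : Type*} [Lattice L] {F I : Set L}
    (hF : UrqFilter F) (hdis : F ∩ I = ∅) :
    ∃ G, UrqFilter G ∧ F ⊆ G ∧ G ∩ I = ∅ ∧
      ∀ G', UrqFilter G' → G' ∩ I = ∅ → G ⊆ G' → G' = G := by
  obtain ⟨m, hFm, hm⟩ := zorn_subset_nonempty {G | UrqFilter G ∧ G ∩ I = ∅}
    (fun c hc hchain hne => by
      refine ⟨⋃₀ c, ⟨⟨?_, ?_, ?_⟩, ?_⟩, fun s hs => Set.subset_sUnion_of_mem hs⟩
      · obtain ⟨s, hs⟩ := hne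
        obtain ⟨a, ha⟩ := (hc hs).1.1
        exact ⟨a, s, hs, ha⟩
      · rintro a b ⟨s, hs, has⟩ hab
        exact ⟨s, hs, (hc hs).1.2.1 a b has hab⟩
      · rintro a b ⟨s, hs, has⟩ ⟨t, ht, hbt⟩
        rcases hchain.total hs ht with h | h
        · exact ⟨t, ht, (hc ht).1.2.2 a b (h has) hbt⟩
        · exact ⟨s, hs, (hc hs).1.2.2 a b has (h hbt)⟩
      · ext a
        simp only [Set.mem_inter_iff, Set.mem_sUnion, Set.mem_empty_iff_false, iff_false,
          not_and]
        rintro ⟨s, hs, has⟩ haI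
        exact absurd (Set.mem_inter has haI) (by rw [(hc hs).2]; exact id)
      ) F ⟨hF, hdis⟩
  exact ⟨m, hm.1.1, hFm, hm.1.2, fun G' hG' hd hsub => hm.eq_of_ge ⟨hG', hd⟩ hsub⟩

lemma urq_extend_ideal {L : Type*} [Lattice L] {G I : Set L}
    (hI : UrqIdeal I) (hdis : G ∩ I = ∅) :
    ∃ J, UrqIdeal J ∧ I ⊆ J ∧ G ∩ J = ∅ ∧
      ∀ J', UrqIdeal J' → G ∩ J' = ∅ → J ⊆ J' → J' = J := by
  obtain ⟨m, hIm, hm⟩ := zorn_subset_nonempty {J | UrqIdeal J ∧ G ∩ J = ∅}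
    (fun c hc hchain hne => by
      refine ⟨⋃₀ c, ⟨⟨?_, ?_, ?_⟩, ?_⟩, fun s hs => Set.subset_sUnion_of_mem hs⟩
      · obtain ⟨s, hs⟩ := hne
        obtain ⟨a, ha⟩ := (hc hs).1.1
        exact ⟨a, s, hs, ha⟩
      · rintro a b ⟨s, hs, has⟩ hab
        exact ⟨s, hs, (hc hs).1.2.1 a b has hab⟩
      · rintro a b ⟨s, hs, has⟩ ⟨t, ht, hbt⟩
        rcases hchain.total hs ht with h | h
        · exact ⟨t, ht, (hc ht).1.2.2 a b (h has) hbt⟩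
        · exact ⟨s, hs, (hc hs).1.2.2 a b has (h hbt)⟩
      · ext a
        simp only [Set.mem_inter_iff, Set.mem_sUnion, Set.mem_empty_iff_false, iff_false,
          not_and]
        intro haG
        rintro ⟨s, hs, has⟩
        exact absurd (Set.mem_inter haG has) (by rw [(hc hs).2]; exact id)
      ) I ⟨hI, hdis⟩
  exact ⟨m, hm.1.1, hIm, hm.1.2, fun J' hJ' hd hsub => hm.eq_of_ge ⟨hJ', hd⟩ hsub⟩

theorem stmt15 {L : Type*} [Lattice L] [BoundedOrder L] :
    UrqLF2 (UrqLe1 (L := L)) (UrqLe2 (L := L)) := by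
  intro x y hxy
  obtain ⟨a, hax, hay⟩ := Set.not_subset.mp hxy
  obtain ⟨hyF, hyI, hyd⟩ := y.2.1
  -- the principal filter ↑a is disjoint from y's ideal
  have hF0 : UrqFilter {b | a ≤ b} :=
    ⟨⟨a, le_rfl⟩, fun c b hc hcb => le_trans hc hcb, fun c b hc hb => le_inf hc hb⟩
  have hdis0 : {b | a ≤ b} ∩ y.1.2 = ∅ := by
    ext b
    simp only [Set.mem_inter_iff, Set.mem_setOf_eq, Set.mem_empty_iff_false, iff_false, not_and]
    intro hab hb
    exact hay (hyI.1.2.1 b a hb hab)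
  obtain ⟨G, hG, hFG, hGdis, hGmax⟩ := urq_extend_filter hF0 hdis0
  have hIGdis : G ∩ y.1.2 = ∅ := hGdis
  obtain ⟨J, hJ, hIJ, hJdis, hJmax⟩ := urq_extend_ideal hyI.1 hIGdis
  have hdisJ : ∀ b, b ∈ G → b ∉ J := fun b hbG hbJ => by
    have : b ∈ G ∩ J := ⟨hbG, hbJ⟩
    rw [hJdis] at this; exact this
  have hGne : G ≠ Set.univ := by
    intro h
    obtain ⟨b, hb⟩ := hJ.1
    exact hdisJ b (h ▸ Set.mem_univ b) hb
  have hJne : J ≠ Set.univ := by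
    intro h
    obtain ⟨b, hb⟩ := hG.1
    exact hdisJ b hb (h ▸ Set.mem_univ b)
  have hmax : UrqMaxFIPair (G, J) := by
    refine ⟨⟨⟨hG, hGne⟩, ⟨hJ, hJne⟩, hJdis⟩, ?_, ?_⟩
    · intro F' hF' hsub
      by_contra hne
      rw [Set.not_nonempty_iff_eq_empty] at hne
      have hF'y : F' ∩ y.1.2 = ∅ := by
        ext b
        simp only [Set.mem_inter_iff, Set.mem_empty_iff_false, iff_false, not_and]
        intro hbF hby
        have : b ∈ F' ∩ J := ⟨hbF, hIJ hby⟩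
        rw [hne] at this; exact this
      exact hsub.2 ((hGmax F' hF'.1 hF'y hsub.1) ▸ Set.Subset.rfl)
    · intro I' hI' hsub
      by_contra hne
      rw [Set.not_nonempty_iff_eq_empty] at hne
      exact hsub.2 ((hJmax I' hI'.1 hne hsub.1) ▸ Set.Subset.rfl)
  refine ⟨⟨(G, J), hmax⟩, hIJ, ?_⟩
  intro w hxw hle
  have haG : a ∈ G := hFG le_rfl
  have haw1 : a ∈ w.1.1 := hle haG
  have haw2 : a ∈ w.1.2 := hxw hax
  have : a ∈ w.1.1 ∩ w.1.2 := ⟨haw1, haw2⟩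
  rw [w.2.1.2.2] at this; exact this
end

section
/- Let (X, ≤₁, ≤₂) be a doubly ordered frame satisfying condition LF₁: whenever x ≰₁ y there exists z with y ≤₁ z such that for all w, x ≤₁ w implies z ≰₂ w. Then for every x ∈ X the up-set ↑₁x = {y : x ≤₁ y} is a stable set, i.e., l(r(↑₁x)) = ↑₁x. Consequently, for every x, the collection k₁(x) := {Y stable : x ∈ Y} is the principal filter of the lattice of stable sets generated by ↑₁x. -/
theorem stmt16 {X : Type*} (le1 le2 : X → X → Prop)
    (h : DoublyOrdered le1 le2) (hLF1 : UrqLF1 le1 le2) (x : X) :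
    UrqStable le1 le2 {y | le1 x y} ∧
    -- k₁(x) = {Y stable : x ∈ Y} is the principal filter generated by ↑₁x
    (∀ Y : Set X, UrqStable le1 le2 Y → (x ∈ Y ↔ {y | le1 x y} ⊆ Y)) := by
  obtain ⟨h1refl, h1trans, h2refl, h2trans, hanti⟩ := h
  constructor
  · apply Set.eq_of_subset_of_subset
    · -- ↑x ⊆ l(r(↑x))
      intro y hy z hyz hz
      exact hz z (h2refl z) (h1trans x y z hy hyz)
    · -- l(r(↑x)) ⊆ ↑x
      intro y hy
      by_contra hxy
      obtain ⟨z, hyz, hz⟩ := hLF1 x y hxy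
      exact hy z hyz (fun w hzw hxw => hz w hxw hzw)
  · intro Y hY
    constructor
    · intro hxY y hxy
      rw [hY] at hxY ⊢
      intro z hyz
      exact hxY z (h1trans x y z hxy hyz)
    · intro hsub
      exact hsub (h1refl x)
end

section
/- Let (X, ≤₁, ≤₂) be a doubly ordered frame, x ∈ X, and set W_x = {y ∈ X : ¬(x ≤₂ y)}. Then the set □₁(W_x) := {y : ∀z, y ≤₁ z → z ∈ W_x} is a stable set, and for every stable set Y one has x ∈ r(Y) if and only if Y ⊆ □₁(W_x); that is, □₁(W_x) is the largest stable set Y with x ∈ r(Y), and the collection k₂(x) := {Y stable : x ∈ r(Y)} is the principal ideal of the lattice of stable sets generated by □₁(W_x). -/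
theorem stmt17 {X : Type*} (le1 le2 : X → X → Prop)
    (h : DoublyOrdered le1 le2) (x : X) :
    UrqStable le1 le2 {y | ∀ z, le1 y z → ¬ le2 x z} ∧
    -- k₂(x) = {Y stable : x ∈ r(Y)} is the principal ideal generated by □₁(W_x)
    (∀ Y : Set X, UrqStable le1 le2 Y →
      (x ∈ rset le2 Y ↔ Y ⊆ {y | ∀ z, le1 y z → ¬ le2 x z})) := by
  obtain ⟨r1, t1, r2, t2, anti⟩ := h
  constructor
  · apply Set.Subset.antisymm
    · intro y hy z hyz hz
      exact hz z (r2 z) fun w hzw => hy w (t1 _ _ _ hyz hzw)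
    · intro y hy z hyz hxz
      have hz := hy z hyz
      simp only [rset, Set.mem_setOf_eq, not_forall, not_not] at hz
      obtain ⟨w, hzw, hw⟩ := hz
      exact hw ⟨w, r1 w, t2 _ _ _ hxz hzw⟩
  · intro Y hY
    constructor
    · intro hx y hyY z hyz hxz
      have := hY ▸ hyY
      have hz := this z hyz
      simp only [rset, Set.mem_setOf_eq, not_forall, not_not] at hz
      obtain ⟨w, hzw, hw⟩ := hz
      exact hx w (t2 _ _ _ hxz hzw) hw
    · intro hYB z hxz hzY
      exact hYB hzY z (r1 z) hxz
end

section
/- Let (X, ≤₁, ≤₂) be a lattice frame, let L_X be its complete bounded lattice of stable sets, and for x ∈ X set k₁(x) = {Y ∈ L_X : x ∈ Y} and k₂(x) = {Y ∈ L_X : x ∈ r(Y)}. Then (k₁(x), k₂(x)) is a maximal filter–ideal pair of L_X: k₁(x) is a proper filter, k₂(x) is a proper ideal, k₁(x) ∩ k₂(x) = ∅, every proper filter of L_X strictly containing k₁(x) meets k₂(x), and every proper ideal of L_X strictly containing k₂(x) meets k₁(x). -/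
/-- The filter of a family of stable sets: a family of stable sets, nonempty,
upward closed among stable sets, and closed under binary meets (intersections). -/
def SFilter {X : Type*} (le1 le2 : X → X → Prop) (K : Set (Set X)) : Prop :=
  (∀ Y ∈ K, UrqStable le1 le2 Y) ∧ K.Nonempty ∧
  (∀ Y Z : Set X, Y ∈ K → UrqStable le1 le2 Z → Y ⊆ Z → Z ∈ K) ∧
  (∀ Y Z : Set X, Y ∈ K → Z ∈ K → Y ∩ Z ∈ K)

/-- A proper filter of the lattice of stable sets. -/
def SProperFilter {X : Type*} (le1 le2 : X → X → Prop) (K : Set (Set X)) : Prop :=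
  SFilter le1 le2 K ∧ K ≠ {Y | UrqStable le1 le2 Y}

/-- An ideal of the lattice of stable sets: a family of stable sets, nonempty,
downward closed among stable sets, and closed under binary joins `l(r(Y ∪ Z))`. -/
def SIdeal {X : Type*} (le1 le2 : X → X → Prop) (K : Set (Set X)) : Prop :=
  (∀ Y ∈ K, UrqStable le1 le2 Y) ∧ K.Nonempty ∧
  (∀ Y Z : Set X, Y ∈ K → UrqStable le1 le2 Z → Z ⊆ Y → Z ∈ K) ∧
  (∀ Y Z : Set X, Y ∈ K → Z ∈ K → lset le1 (rset le2 (Y ∪ Z)) ∈ K)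

/-- A proper ideal of the lattice of stable sets. -/
def SProperIdeal {X : Type*} (le1 le2 : X → X → Prop) (K : Set (Set X)) : Prop :=
  SIdeal le1 le2 K ∧ K ≠ {Y | UrqStable le1 le2 Y}

/-- `k₁(x) = {Y ∈ L_X : x ∈ Y}`. -/
def k1 {X : Type*} (le1 le2 : X → X → Prop) (x : X) : Set (Set X) :=
  {Y | UrqStable le1 le2 Y ∧ x ∈ Y}

/-- `k₂(x) = {Y ∈ L_X : x ∈ r(Y)}`. -/
def k2 {X : Type*} (le1 le2 : X → X → Prop) (x : X) : Set (Set X) :=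
  {Y | UrqStable le1 le2 Y ∧ x ∈ rset le2 Y}


section UrqAux
variable {X : Type*} {le1 le2 : X → X → Prop}

lemma lset_anti {Y Z : Set X} (h : Y ⊆ Z) : lset le1 Z ⊆ lset le1 Y :=
  fun _ hx z hxz hzY => hx z hxz (h hzY)

lemma rset_anti {Y Z : Set X} (h : Y ⊆ Z) : rset le2 Z ⊆ rset le2 Y :=
  fun _ hx z hxz hzY => hx z hxz (h hzY)

lemma lset_incr (t1 : ∀ x y z, le1 x y → le1 y z → le1 x z) (Z : Set X) :
    UrqIncr le1 (lset le1 Z) :=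
  fun x y hx hxy z hyz => hx z (t1 x y z hxy hyz)

lemma rset_incr (t2 : ∀ x y z, le2 x y → le2 y z → le2 x z) (Z : Set X) :
    UrqIncr le2 (rset le2 Z) :=
  fun x y hx hxy z hyz => hx z (t2 x y z hxy hyz)

lemma subset_lr (r2 : ∀ x, le2 x x) {Y : Set X} (hY : UrqIncr le1 Y) :
    Y ⊆ lset le1 (rset le2 Y) :=
  fun y hy z hyz hz => hz z (r2 z) (hY y z hy hyz)

lemma subset_rl (r1 : ∀ x, le1 x x) {Z : Set X} (hZ : UrqIncr le2 Z) :
    Z ⊆ rset le2 (lset le1 Z) :=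
  fun z hz w hzw hw => hw w (r1 w) (hZ z w hz hzw)

lemma r_lr (r1 : ∀ x, le1 x x) (r2 : ∀ x, le2 x x)
    (t2 : ∀ x y z, le2 x y → le2 y z → le2 x z)
    {Y : Set X} (hY : UrqIncr le1 Y) :
    rset le2 (lset le1 (rset le2 Y)) = rset le2 Y :=
  Set.Subset.antisymm (rset_anti (subset_lr r2 hY)) (subset_rl r1 (rset_incr t2 Y))

lemma stable_lr (r1 : ∀ x, le1 x x) (r2 : ∀ x, le2 x x)
    (t2 : ∀ x y z, le2 x y → le2 y z → le2 x z)
    {Y : Set X} (hY : UrqIncr le1 Y) :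
    UrqStable le1 le2 (lset le1 (rset le2 Y)) := by
  unfold UrqStable
  rw [r_lr r1 r2 t2 hY]

lemma stable_l (r1 : ∀ x, le1 x x) (r2 : ∀ x, le2 x x)
    (t1 : ∀ x y z, le1 x y → le1 y z → le1 x z)
    {Z : Set X} (hZ : UrqIncr le2 Z) :
    UrqStable le1 le2 (lset le1 Z) :=
  Set.Subset.antisymm (subset_lr r2 (lset_incr t1 Z)) (lset_anti (subset_rl r1 hZ))

lemma stable_incr (t1 : ∀ x y z, le1 x y → le1 y z → le1 x z)
    {Y : Set X} (hY : UrqStable le1 le2 Y) : UrqIncr le1 Y := by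
  rw [hY]; exact lset_incr t1 _

lemma stable_inter (r2 : ∀ x, le2 x x)
    (t1 : ∀ x y z, le1 x y → le1 y z → le1 x z)
    {Y Z : Set X} (hY : UrqStable le1 le2 Y) (hZ : UrqStable le1 le2 Z) :
    UrqStable le1 le2 (Y ∩ Z) := by
  have hi : UrqIncr le1 (Y ∩ Z) := fun a b ha hab =>
    ⟨stable_incr t1 hY a b ha.1 hab, stable_incr t1 hZ a b ha.2 hab⟩
  apply Set.Subset.antisymm (subset_lr r2 hi)
  intro w hw
  constructor
  · rw [hY]; exact lset_anti (rset_anti Set.inter_subset_left) hw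
  · rw [hZ]; exact lset_anti (rset_anti Set.inter_subset_right) hw

lemma rset_union {Y Z : Set X} :
    rset le2 (Y ∪ Z) = rset le2 Y ∩ rset le2 Z := by
  ext w
  constructor
  · exact fun hw => ⟨fun u hu huY => hw u hu (Or.inl huY),
      fun u hu huZ => hw u hu (Or.inr huZ)⟩
  · rintro ⟨h1, h2⟩ u hu (huY | huZ)
    · exact h1 u hu huY
    · exact h2 u hu huZ

lemma stable_univ (r2 : ∀ x, le2 x x) : UrqStable le1 le2 (Set.univ : Set X) :=
  Set.Subset.antisymm (fun y _ z _ hz => hz z (r2 z) (Set.mem_univ z))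
    (fun y _ => Set.mem_univ y)

lemma stable_empty (r1 : ∀ x, le1 x x) : UrqStable le1 le2 (∅ : Set X) :=
  Set.Subset.antisymm (fun _ h => h.elim)
    (fun w hw => absurd (fun z _ hz => hz) (hw w (r1 w)))

end UrqAux

theorem stmt18 {X : Type*} (le1 le2 : X → X → Prop)
    (h : LatticeFrame le1 le2) (x : X) :
    SProperFilter le1 le2 (k1 le1 le2 x) ∧
    SProperIdeal le1 le2 (k2 le1 le2 x) ∧
    k1 le1 le2 x ∩ k2 le1 le2 x = ∅ ∧
    (∀ K : Set (Set X), SProperFilter le1 le2 K → k1 le1 le2 x ⊂ K →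
      (K ∩ k2 le1 le2 x).Nonempty) ∧
    (∀ K : Set (Set X), SProperIdeal le1 le2 K → k2 le1 le2 x ⊂ K →
      (k1 le1 le2 x ∩ K).Nonempty) := by

  obtain ⟨⟨r1, t1, r2, t2, anti⟩, _lf0, lf1, lf2⟩ := h
  -- the canonical stable sets around x
  have upincr : UrqIncr le1 {w | le1 x w} := fun a b ha hab => t1 x a b ha hab
  have dnincr : UrqIncr le2 {w | le2 x w} := fun a b ha hab => t2 x a b ha hab
  set C : Set X := lset le1 (rset le2 {w | le1 x w}) with hCdef
  have hCstable : UrqStable le1 le2 C := stable_lr r1 r2 t2 upincr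
  have hxC : x ∈ C := subset_lr r2 upincr (r1 x)
  set D : Set X := lset le1 {w | le2 x w} with hDdef
  have hDstable : UrqStable le1 le2 D := stable_l r1 r2 t1 dnincr
  have hxrD : x ∈ rset le2 D := subset_rl r1 dnincr (r2 x)
  refine ⟨⟨⟨fun Y hY => hY.1, ⟨Set.univ, stable_univ r2, Set.mem_univ x⟩,
      fun Y Z hY hZ hYZ => ⟨hZ, hYZ hY.2⟩,
      fun Y Z hY hZ => ⟨stable_inter r2 t1 hY.1 hZ.1, hY.2, hZ.2⟩⟩, ?_⟩,
    ⟨⟨fun Y hY => hY.1, ⟨∅, stable_empty r1, fun z _ hz => hz⟩,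
      fun Y Z hY hZ hZY => ⟨hZ, rset_anti hZY hY.2⟩,
      fun Y Z hY hZ => ⟨stable_lr r1 r2 t2 (fun a b ha hab => ?_), ?_⟩⟩, ?_⟩,
    ?_, ?_, ?_⟩
  · -- k1 proper
    intro hk
    have : (∅ : Set X) ∈ k1 le1 le2 x := by
      rw [hk]; exact stable_empty r1
    exact this.2
  · -- union increasing
    rcases ha with ha | ha
    · exact Or.inl (stable_incr t1 hY.1 a b ha hab)
    · exact Or.inr (stable_incr t1 hZ.1 a b ha hab)
  · -- x in r of the join
    rw [r_lr r1 r2 t2]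
    · rw [rset_union]; exact ⟨hY.2, hZ.2⟩
    · intro a b ha hab
      rcases ha with ha | ha
      · exact Or.inl (stable_incr t1 hY.1 a b ha hab)
      · exact Or.inr (stable_incr t1 hZ.1 a b ha hab)
  · -- k2 proper
    intro hk
    have : (Set.univ : Set X) ∈ k2 le1 le2 x := by
      rw [hk]; exact stable_univ r2
    exact this.2 x (r2 x) (Set.mem_univ x)
  · -- disjoint
    ext Y
    simp only [Set.mem_inter_iff, Set.mem_empty_iff_false, iff_false]
    rintro ⟨⟨_, hxY⟩, ⟨_, hxr⟩⟩
    exact hxr x (r2 x) hxY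
  · -- filter maximality
    intro K hK hsub
    obtain ⟨A, hAK, hAn⟩ := Set.exists_of_ssubset hsub
    have hAstable : UrqStable le1 le2 A := hK.1.1 A hAK
    have hxA : x ∉ A := fun hx => hAn ⟨hAstable, hx⟩
    have hCK : C ∈ K := hsub.1 ⟨hCstable, hxC⟩
    have hWK : A ∩ C ∈ K := hK.1.2.2.2 A C hAK hCK
    refine ⟨A ∩ C, hWK, stable_inter r2 t1 hAstable hCstable, ?_⟩
    intro w hxw hw
    obtain ⟨hwA, hwC⟩ := hw
    by_cases h1 : le1 x w
    · exact hxA (anti x w h1 hxw ▸ hwA)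
    · obtain ⟨z, hwz, hz⟩ := lf1 x w h1
      exact hwC z hwz (fun u hzu hxu => hz u hxu hzu)
  · -- ideal maximality
    intro K hK hsub
    obtain ⟨B, hBK, hBn⟩ := Set.exists_of_ssubset hsub
    have hBstable : UrqStable le1 le2 B := hK.1.1 B hBK
    have hxB : ∃ y, le2 x y ∧ y ∈ B := by
      by_contra hc
      push_neg at hc
      exact hBn ⟨hBstable, fun z hz hzB => hc z hz hzB⟩
    obtain ⟨y, hxy, hyB⟩ := hxB
    have hDK : D ∈ K := hsub.1 ⟨hDstable, hxrD⟩
    have hWK : lset le1 (rset le2 (B ∪ D)) ∈ K := hK.1.2.2.2 B D hBK hDK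
    have hBDincr : UrqIncr le1 (B ∪ D) := by
      intro a b ha hab
      rcases ha with ha | ha
      · exact Or.inl (stable_incr t1 hBstable a b ha hab)
      · exact Or.inr (lset_incr t1 _ a b ha hab)
    refine ⟨lset le1 (rset le2 (B ∪ D)), ⟨stable_lr r1 r2 t2 hBDincr, ?_⟩, hWK⟩
    intro w hxw hw
    by_cases h2 : le2 x w
    · have := anti x w hxw h2
      exact hw y (this ▸ hxy) (Or.inl hyB)
    · obtain ⟨z, hwz, hz⟩ := lf2 x w h2
      exact hw z hwz (Or.inr fun u hzu hxu => hz u hxu hzu)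
end

section
/- Let (X, ≤₁, ≤₂) be a lattice frame, let L_X be its complete bounded lattice of stable sets, and for x ∈ X set k₁(x) = {Y ∈ L_X : x ∈ Y} and k₂(x) = {Y ∈ L_X : x ∈ r(Y)}. Then the map x ↦ (k₁(x), k₂(x)) is injective, and for all x, y ∈ X: x ≤₁ y if and only if k₁(x) ⊆ k₁(y), and x ≤₂ y if and only if k₂(x) ⊆ k₂(y). Hence every lattice frame embeds into the Urquhart canonical frame of its lattice of stable sets. -/
theorem stmt19 {X : Type*} (le1 le2 : X → X → Prop)
    (h : LatticeFrame le1 le2) :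
    Function.Injective (fun x : X => (k1 le1 le2 x, k2 le1 le2 x)) ∧
    (∀ x y : X, le1 x y ↔ k1 le1 le2 x ⊆ k1 le1 le2 y) ∧
    (∀ x y : X, le2 x y ↔ k2 le1 le2 x ⊆ k2 le1 le2 y) := by
  obtain ⟨⟨r1, t1, r2, t2, antisym⟩, _, hLF1, hLF2⟩ := h
  have lincr : ∀ Y : Set X, ∀ a b, a ∈ lset le1 Y → le1 a b → b ∈ lset le1 Y := by
    intro Y a b ha hab z hbz; exact ha z (t1 _ _ _ hab hbz)
  have rincr : ∀ Y : Set X, ∀ a b, a ∈ rset le2 Y → le2 a b → b ∈ rset le2 Y := by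
    intro Y a b ha hab z hbz; exact ha z (t2 _ _ _ hab hbz)
  have lanti : ∀ Y Z : Set X, Y ⊆ Z → lset le1 Z ⊆ lset le1 Y := by
    intro Y Z hYZ a ha z haz hz; exact ha z haz (hYZ hz)
  have sub_lr : ∀ Y : Set X, (∀ a b, a ∈ Y → le1 a b → b ∈ Y) →
      Y ⊆ lset le1 (rset le2 Y) := by
    intro Y hY a ha z haz hz
    exact hz z (r2 z) (hY a z ha haz)
  have sub_rl : ∀ Y : Set X, (∀ a b, a ∈ Y → le2 a b → b ∈ Y) →
      Y ⊆ rset le2 (lset le1 Y) := by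
    intro Y hY a ha z haz hz
    exact hz z (r1 z) (hY a z ha haz)
  have lstable : ∀ Z : Set X, (∀ a b, a ∈ Z → le2 a b → b ∈ Z) →
      UrqStable le1 le2 (lset le1 Z) := by
    intro Z hZ
    exact Set.Subset.antisymm (sub_lr _ (lincr Z)) (lanti _ _ (sub_rl Z hZ))
  -- stable sets are ≤₁-increasing
  have stab_incr : ∀ Y : Set X, UrqStable le1 le2 Y →
      ∀ a b, a ∈ Y → le1 a b → b ∈ Y := by
    intro Y hY a b ha hab
    rw [hY] at ha ⊢
    exact lincr _ a b ha hab
  have h1 : ∀ x y : X, le1 x y ↔ k1 le1 le2 x ⊆ k1 le1 le2 y := by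
    intro x y
    constructor
    · intro hxy Y ⟨hst, hx⟩
      exact ⟨hst, stab_incr Y hst x y hx hxy⟩
    · intro hsub
      by_contra hxy
      obtain ⟨z, hyz, hz⟩ := hLF1 x y hxy
      set Y := lset le1 (rset le2 {w | le1 x w}) with hYdef
      have hstab : UrqStable le1 le2 Y :=
        lstable _ (rincr {w | le1 x w})
      have hxY : x ∈ Y := sub_lr _ (fun a b ha hab => t1 _ _ _ ha hab) (r1 x)
      obtain ⟨_, hyY⟩ := hsub ⟨hstab, hxY⟩
      have hzr : z ∈ rset le2 {w | le1 x w} := by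
        intro w hzw hw; exact hz w hw hzw
      exact hyY z hyz hzr
  have h2 : ∀ x y : X, le2 x y ↔ k2 le1 le2 x ⊆ k2 le1 le2 y := by
    intro x y
    constructor
    · intro hxy Y ⟨hst, hx⟩
      exact ⟨hst, rincr _ x y hx hxy⟩
    · intro hsub
      by_contra hxy
      obtain ⟨z, hyz, hz⟩ := hLF2 x y hxy
      set Y := lset le1 {w | le2 x w} with hYdef
      have hstab : UrqStable le1 le2 Y :=
        lstable _ (fun a b ha hab => t2 _ _ _ ha hab)
      have hxY : x ∈ rset le2 Y :=
        sub_rl _ (fun a b ha hab => t2 _ _ _ ha hab) (r2 x)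
      obtain ⟨_, hyY⟩ := hsub ⟨hstab, hxY⟩
      have hzY : z ∈ Y := by
        intro v hzv hv; exact hz v hv hzv
      exact hyY z hyz hzY
  refine ⟨?_, h1, h2⟩
  intro x y hxy
  simp only [Prod.mk.injEq] at hxy
  obtain ⟨e1, e2⟩ := hxy
  exact antisym x y ((h1 x y).mpr (le_of_eq e1)) ((h2 x y).mpr (le_of_eq e2))
end
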